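/- Let k ≥ 1 and t ≥ 1. For x ∈ M'(t,k), set L(x) = 2t(1 + max_{1 ≤ i ≤ k} ‖x i‖), regarded as the real point (L(x), 0) of ℂ. Then the tuple S(x) = (x 1, …, x k, L(x)) obtained by appending this point belongs to M'(t,k+1); moreover the resulting map S : M'(t,k) → M'(t,k+1) is continuous (with both sides carrying the subspace topology from the ambient products of copies of ℂ). -/

import Mathlib

/-- The modified center of mass arrangement `M'(t,k)`: tuples such that for every
`s` with `1 ≤ s ≤ t`, any two distinct `s`-element subsets of indices have
distinct sums. -/
def modifiedCenterMassArrangement (t k : ℕ) : Set (Fin k → ℂ) :=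
  {x | ∀ s : ℕ, 1 ≤ s → s ≤ t → ∀ S T : Finset (Fin k), S.card = s → T.card = s →
    S ≠ T → (∑ i ∈ S, x i) ≠ ∑ i ∈ T, x i}

/-- The appended point `L(x) = 2t(1 + max_i ‖x i‖)`, regarded as the real point
`(L(x), 0)` of `ℂ`. -/
noncomputable def stabPoint (t : ℕ) {k : ℕ} (x : Fin k → ℂ) : ℂ :=
  ((2 * t * (1 + ⨆ i, ‖x i‖) : ℝ) : ℂ)

/-- A finset of `Fin (k+1)` not containing `Fin.last k` is the image of a finset of `Fin k`. -/
lemma exists_map_castSucc {k : ℕ} (S : Finset (Fin (k + 1))) (h : Fin.last k ∉ S) :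
    ∃ S' : Finset (Fin k), S = S'.map Fin.castSuccEmb := by
  have hsub : S ⊆ (Finset.univ : Finset (Fin k)).map Fin.castSuccEmb := by
    intro i hi
    have hne : i ≠ Fin.last k := fun hEq => h (hEq ▸ hi)
    obtain ⟨j, hj⟩ := Fin.exists_castSucc_eq.mpr hne
    simp only [Finset.mem_map, Fin.coe_castSuccEmb]
    exact ⟨j, Finset.mem_univ _, hj⟩
  obtain ⟨S', _, hS'⟩ := Finset.subset_map_iff.mp hsub
  exact ⟨S', hS'⟩

lemma sum_map_castSucc {k : ℕ} (x : Fin k → ℂ) (L : ℂ) (S' : Finset (Fin k)) :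
    (∑ i ∈ S'.map Fin.castSuccEmb, (Fin.snoc x L : Fin (k + 1) → ℂ) i) = ∑ i ∈ S', x i := by
  rw [Finset.sum_map]
  simp only [Fin.coe_castSuccEmb, Fin.snoc_castSucc]

/-- For `k ≥ 1`, `t ≥ 1`: appending the point `L(x) = 2t(1 + max_i ‖x i‖)` to a tuple
`x ∈ M'(t,k)` produces a tuple in `M'(t,k+1)`, and the resulting stabilization map
`S : M'(t,k) → M'(t,k+1)` is continuous (both sides carrying the subspace topology). -/
theorem stabilization_mapsTo_and_continuous (t k : ℕ) (ht : 1 ≤ t) (hk : 1 ≤ k) :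
    ∃ hS : ∀ x : modifiedCenterMassArrangement t k,
        (Fin.snoc (x : Fin k → ℂ) (stabPoint t (x : Fin k → ℂ)) : Fin (k + 1) → ℂ) ∈
          modifiedCenterMassArrangement t (k + 1),
      Continuous fun x : modifiedCenterMassArrangement t k =>
        (⟨Fin.snoc (x : Fin k → ℂ) (stabPoint t (x : Fin k → ℂ)), hS x⟩ :
          modifiedCenterMassArrangement t (k + 1)) := by
  haveI : NeZero k := ⟨Nat.one_le_iff_ne_zero.mp hk⟩
  haveI : Nonempty (Fin k) := ⟨⟨0, hk⟩⟩
  have hmem : ∀ x : modifiedCenterMassArrangement t k,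
      (Fin.snoc (x : Fin k → ℂ) (stabPoint t (x : Fin k → ℂ)) : Fin (k + 1) → ℂ) ∈
        modifiedCenterMassArrangement t (k + 1) := by
    rintro ⟨x, hx⟩
    set M : ℝ := ⨆ i, ‖x i‖ with hMdef
    set L : ℂ := stabPoint t x with hLdef
    set y : Fin (k + 1) → ℂ := Fin.snoc x L with hydef
    have hbdd : BddAbove (Set.range fun i => ‖x i‖) := Set.Finite.bddAbove (Set.finite_range _)
    have hle : ∀ i, ‖x i‖ ≤ M := fun i => le_ciSup hbdd i
    have hM0 : 0 ≤ M := le_trans (norm_nonneg _) (hle ⟨0, hk⟩)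
    have hnormL : ‖L‖ = 2 * t * (1 + M) := by
      rw [hLdef]
      unfold stabPoint
      rw [Complex.norm_real, Real.norm_of_nonneg (by positivity)]
    have hbound : ∀ U : Finset (Fin k), ‖∑ i ∈ U, x i‖ ≤ (U.card : ℝ) * M := by
      intro U
      calc ‖∑ i ∈ U, x i‖ ≤ ∑ i ∈ U, ‖x i‖ := norm_sum_le _ _
        _ ≤ ∑ _i ∈ U, M := Finset.sum_le_sum fun i _ => hle i
        _ = (U.card : ℝ) * M := by rw [Finset.sum_const, nsmul_eq_mul]
    -- asymmetric case
    have hasym : ∀ s : ℕ, 1 ≤ s → s ≤ t → ∀ S T : Finset (Fin (k + 1)), S.card = s →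
        T.card = s → Fin.last k ∈ S → Fin.last k ∉ T →
        (∑ i ∈ S, y i) ≠ ∑ i ∈ T, y i := by
      intro s hs1 hst S T hScard hTcard hSl hTl heq
      obtain ⟨T', rfl⟩ := exists_map_castSucc T hTl
      obtain ⟨S', hS'⟩ := exists_map_castSucc (S.erase (Fin.last k)) (Finset.notMem_erase _ _)
      have hsumS : (∑ i ∈ S, y i) = L + ∑ i ∈ S', x i := by
        rw [← Finset.add_sum_erase _ _ hSl, hS', sum_map_castSucc]
        simp [hydef]
      have hsumT : (∑ i ∈ T'.map Fin.castSuccEmb, y i) = ∑ i ∈ T', x i :=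
        sum_map_castSucc x L T'
      have hS'card : (S'.card : ℝ) ≤ (t : ℝ) - 1 := by
        have : S'.card = s - 1 := by
          rw [← Finset.card_map Fin.castSuccEmb, ← hS', Finset.card_erase_of_mem hSl, hScard]
        rw [this]
        have : s - 1 ≤ t - 1 := Nat.sub_le_sub_right hst 1
        have h2 : ((s - 1 : ℕ) : ℝ) ≤ ((t - 1 : ℕ) : ℝ) := Nat.cast_le.mpr this
        calc ((s - 1 : ℕ) : ℝ) ≤ ((t - 1 : ℕ) : ℝ) := h2
          _ = (t : ℝ) - 1 := by
            rw [Nat.cast_sub ht]; norm_num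
      have hT'card : (T'.card : ℝ) ≤ (t : ℝ) := by
        have : T'.card = s := by rw [← Finset.card_map Fin.castSuccEmb, hTcard]
        rw [this]; exact_mod_cast hst
      -- from equality, ‖L‖ ≤ ‖∑ T'‖ + ‖∑ S'‖
      have hLeq : L = (∑ i ∈ T', x i) - ∑ i ∈ S', x i := by
        rw [hsumS, hsumT] at heq; linear_combination heq
      have h1 : ‖L‖ ≤ (T'.card : ℝ) * M + (S'.card : ℝ) * M := by
        rw [hLeq]
        exact le_trans (norm_sub_le _ _) (add_le_add (hbound _) (hbound _))
      have h2 : (T'.card : ℝ) * M + (S'.card : ℝ) * M ≤ (t : ℝ) * M + ((t : ℝ) - 1) * M :=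
        add_le_add (mul_le_mul_of_nonneg_right hT'card hM0)
          (mul_le_mul_of_nonneg_right hS'card hM0)
      rw [hnormL] at h1
      have ht1 : (1 : ℝ) ≤ (t : ℝ) := by exact_mod_cast ht
      nlinarith
    intro s hs1 hst S T hScard hTcard hST
    by_cases hSl : Fin.last k ∈ S <;> by_cases hTl : Fin.last k ∈ T
    · -- both contain last
      intro heq
      rcases Nat.lt_or_ge 1 s with hs2 | hs2
      · -- s ≥ 2
        obtain ⟨S', hS'⟩ := exists_map_castSucc (S.erase (Fin.last k)) (Finset.notMem_erase _ _)
        obtain ⟨T', hT'⟩ := exists_map_castSucc (T.erase (Fin.last k)) (Finset.notMem_erase _ _)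
        have hsumS : (∑ i ∈ S, y i) = L + ∑ i ∈ S', x i := by
          rw [← Finset.add_sum_erase _ _ hSl, hS', sum_map_castSucc]
          simp [hydef]
        have hsumT : (∑ i ∈ T, y i) = L + ∑ i ∈ T', x i := by
          rw [← Finset.add_sum_erase _ _ hTl, hT', sum_map_castSucc]
          simp [hydef]
        have heq' : (∑ i ∈ S', x i) = ∑ i ∈ T', x i := by
          rw [hsumS, hsumT] at heq
          exact add_left_cancel heq
        have hS'card : S'.card = s - 1 := by
          rw [← Finset.card_map Fin.castSuccEmb, ← hS', Finset.card_erase_of_mem hSl, hScard]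
        have hT'card : T'.card = s - 1 := by
          rw [← Finset.card_map Fin.castSuccEmb, ← hT', Finset.card_erase_of_mem hTl, hTcard]
        have hne : S' ≠ T' := by
          rintro rfl
          apply hST
          rw [← Finset.insert_erase hSl, ← Finset.insert_erase hTl, hS', hT']
        exact hx (s - 1) (Nat.le_sub_one_of_lt hs2) (le_trans (Nat.sub_le s 1) hst)
          S' T' hS'card hT'card hne heq'
      · -- s = 1 : S = T = {last}, contradiction
        have hs : s = 1 := le_antisymm hs2 hs1
        apply hST
        have hSe : S = {Fin.last k} :=
          Finset.eq_singleton_iff_unique_mem.mpr ⟨hSl, fun a ha => by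
            have := Finset.card_le_one.mp (by rw [hScard, hs]) a ha (Fin.last k) hSl
            exact this⟩
        have hTe : T = {Fin.last k} :=
          Finset.eq_singleton_iff_unique_mem.mpr ⟨hTl, fun a ha => by
            have := Finset.card_le_one.mp (by rw [hTcard, hs]) a ha (Fin.last k) hTl
            exact this⟩
        rw [hSe, hTe]
    · exact hasym s hs1 hst S T hScard hTcard hSl hTl
    · exact fun heq => hasym s hs1 hst T S hTcard hScard hTl hSl heq.symm
    · -- neither contains last
      obtain ⟨S', rfl⟩ := exists_map_castSucc S hSl
      obtain ⟨T', rfl⟩ := exists_map_castSucc T hTl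
      rw [sum_map_castSucc, sum_map_castSucc]
      have hne : S' ≠ T' := fun h => hST (by rw [h])
      exact hx s hs1 hst S' T' (by rw [← Finset.card_map Fin.castSuccEmb, hScard])
        (by rw [← Finset.card_map Fin.castSuccEmb, hTcard]) hne
  refine ⟨hmem, ?_⟩
  have hstab : Continuous fun x : Fin k → ℂ => stabPoint t x := by
    unfold stabPoint
    refine Complex.continuous_ofReal.comp ?_
    have hrw : (fun x : Fin k → ℂ => 2 * (t : ℝ) * (1 + ⨆ i, ‖x i‖)) =
        fun x : Fin k → ℂ =>
          2 * (t : ℝ) * (1 + Finset.univ.sup' Finset.univ_nonempty fun i => ‖x i‖) := by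
      funext x
      rw [Finset.sup'_univ_eq_ciSup]
    rw [hrw]
    exact continuous_const.mul (continuous_const.add
      (Continuous.finset_sup'_apply Finset.univ_nonempty fun i _ => (continuous_apply i).norm))
  refine Continuous.subtype_mk ?_ _
  refine continuous_pi fun i => ?_
  refine Fin.lastCases ?_ (fun j => ?_) i
  · simpa [Function.comp_def] using hstab.comp continuous_subtype_val
  · simpa [Function.comp_def] using (continuous_apply j).comp continuous_subtype_val
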